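/- arXiv:2008.05854 — 2 statements merged into one kernel-verified Lean document; each statement's English description precedes it below -/
import Mathlib

section
/- Let $S_1,\ldots,S_K$ be mutually independent random symmetric $p\times p$ real matrices with finite second moments, $E[S_k]=M_k$, and let $\delta_k = p^{-1}E[\|S_k-M_k\|_F^2]$, $c_{ij}=p^{-1}\operatorname{tr}(M_iM_j)$, $D=\operatorname{diag}(\delta_1,\ldots,\delta_K)$, $C=(c_{ij})$, $c_k$ the $k$-th column of $C$. If $\delta_k>0$ for all $k$, then for every $a\in\mathbb{R}^K$ and every class $k$, $E[\|\sum_{i=1}^K a_i S_i - M_k\|_F^2] = p\,(a^\top (D+C)a - 2 c_k^\top a + c_{kk})$, and $D+C$ is a symmetric positive definite matrix. -/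
/-!
Entrywise, `∑ aᵢ Sᵢ - M_k` is a linear combination of pairwise independent square-integrable
scalars minus a constant, so its second moment is the weighted sum of the variances plus the
squared bias. Summing over the `p²` entries gives `∑ aᵢ² p δᵢ + ‖∑ aᵢ Mᵢ - M_k‖_F²`. Since the
`Mᵢ` are symmetric, `p C` is the Frobenius Gram matrix of `M₁, …, M_K`, and the bias term is its
quadratic form at `a - e_k`. A Gram matrix is positive semidefinite, so adding the positive
diagonal `D` makes `D + C` positive definite.
-/

open MeasureTheory Matrix ProbabilityTheory Filter Asymptotics

noncomputable section

/-- Borel/pi measurable structure on matrices (a matrix is a function of its entries). -/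
instance matrixMeasurableSpace {p : ℕ} : MeasurableSpace (Matrix (Fin p) (Fin p) ℝ) :=
  inferInstanceAs (MeasurableSpace (Fin p → Fin p → ℝ))

/-- Squared Frobenius norm `‖A‖_F² = tr(Aᵀ A)`. -/
def frobSq {p : ℕ} (A : Matrix (Fin p) (Fin p) ℝ) : ℝ := (Aᵀ * A).trace

/-- Entrywise expectation of a random matrix. -/
def matExp {Ω : Type*} [MeasurableSpace Ω] (μ : Measure Ω) {p : ℕ}
    (S : Ω → Matrix (Fin p) (Fin p) ℝ) : Matrix (Fin p) (Fin p) ℝ :=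
  Matrix.of fun i j => ∫ ω, S ω i j ∂μ

section QuadraticForm

variable {R ι : Type*} [CommRing R] [Fintype ι] [DecidableEq ι]

lemma Matrix.IsSymm.dotProduct_mulVec_sub_single {A : Matrix ι ι R} (hA : A.IsSymm)
    (a : ι → R) (k : ι) :
    (a - Pi.single k 1) ⬝ᵥ (A *ᵥ (a - Pi.single k 1))
      = a ⬝ᵥ (A *ᵥ a) - 2 * ((fun i => A i k) ⬝ᵥ a) + A k k := by
  have hrow : Pi.single k 1 ⬝ᵥ (A *ᵥ a) = (fun i => A i k) ⬝ᵥ a := by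
    rw [single_one_dotProduct, mulVec]
    exact congrArg (· ⬝ᵥ a) (funext fun j => hA.apply j k)
  have hcol : a ⬝ᵥ (A *ᵥ Pi.single k 1) = (fun i => A i k) ⬝ᵥ a := by
    rw [mulVec_single_one, dotProduct_comm]; rfl
  have hdiag : Pi.single k 1 ⬝ᵥ (A *ᵥ Pi.single k 1) = A k k := by
    rw [single_one_dotProduct, mulVec_single_one, col_apply]
  rw [mulVec_sub, sub_dotProduct, dotProduct_sub, dotProduct_sub, hrow, hcol, hdiag]
  ring

lemma dotProduct_diagonal_mulVec_self (d a : ι → R) :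
    a ⬝ᵥ (diagonal d *ᵥ a) = ∑ i, a i ^ 2 * d i := by
  simp only [dotProduct, mulVec_diagonal]
  exact Finset.sum_congr rfl fun i _ => by ring

end QuadraticForm

section Frobenius

variable {p : ℕ} {ι : Type*}

lemma frobSq_eq_sum_sq (A : Matrix (Fin p) (Fin p) ℝ) : frobSq A = ∑ r, ∑ c, A r c ^ 2 := by
  rw [frobSq, trace, Finset.sum_comm]
  simp [mul_apply, sq]

lemma frobSq_nonneg (A : Matrix (Fin p) (Fin p) ℝ) : 0 ≤ frobSq A := by
  rw [frobSq_eq_sum_sq]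
  positivity

def frobGram (M : ι → Matrix (Fin p) (Fin p) ℝ) : Matrix ι ι ℝ :=
  of fun i j => ((M i)ᵀ * M j).trace

lemma frobGram_isSymm (M : ι → Matrix (Fin p) (Fin p) ℝ) : (frobGram M).IsSymm := by
  ext i j
  simp only [frobGram, transpose_apply, of_apply]
  rw [← trace_transpose, transpose_mul, transpose_transpose]

lemma frobSq_sum_smul [Fintype ι] (M : ι → Matrix (Fin p) (Fin p) ℝ) (x : ι → ℝ) :
    frobSq (∑ i, x i • M i) = x ⬝ᵥ (frobGram M *ᵥ x) := by
  simp only [frobSq, transpose_sum, transpose_smul, Finset.sum_mul, Finset.mul_sum,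
    smul_mul_smul_comm, trace_sum, trace_smul, dotProduct, mulVec, frobGram, of_apply, smul_eq_mul]
  rw [Finset.sum_comm]
  exact Finset.sum_congr rfl fun i _ => Finset.sum_congr rfl fun j _ => by ring

lemma frobGram_posSemidef [Fintype ι] (M : ι → Matrix (Fin p) (Fin p) ℝ) :
    (frobGram M).PosSemidef :=
  .of_dotProduct_mulVec_nonneg (isHermitian_iff_isSymm.mpr (frobGram_isSymm M)) fun x => by
    simpa only [star_trivial, ← frobSq_sum_smul] using frobSq_nonneg _

lemma frobSq_sum_smul_sub [Fintype ι] [DecidableEq ι]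
    (M : ι → Matrix (Fin p) (Fin p) ℝ) (a : ι → ℝ) (k : ι) :
    frobSq (∑ i, a i • M i - M k)
      = (a - Pi.single k 1) ⬝ᵥ (frobGram M *ᵥ (a - Pi.single k 1)) := by
  rw [← frobSq_sum_smul]
  simp [sub_smul, Finset.sum_sub_distrib, Pi.single_apply]

end Frobenius

section RandomMatrix

variable {Ω : Type*} [MeasurableSpace Ω] {μ : Measure Ω} {p : ℕ}

lemma measurable_matrix_apply (r c : Fin p) :
    Measurable fun A : Matrix (Fin p) (Fin p) ℝ => A r c :=
  (measurable_pi_apply c).comp (measurable_pi_apply r)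

lemma matExp_transpose {S : Ω → Matrix (Fin p) (Fin p) ℝ} (hS : ∀ ω, (S ω)ᵀ = S ω) :
    (matExp μ S)ᵀ = matExp μ S := by
  ext r c
  exact integral_congr_ae (.of_forall fun ω => congrFun (congrFun (hS ω) r) c)

lemma integral_frobSq {F : Ω → Matrix (Fin p) (Fin p) ℝ}
    (hF : ∀ r c, MemLp (fun ω => F ω r c) 2 μ) :
    ∫ ω, frobSq (F ω) ∂μ = ∑ r, ∑ c, ∫ ω, F ω r c ^ 2 ∂μ := by
  simp only [frobSq_eq_sum_sq]
  rw [integral_finsetSum _ fun r _ => integrable_finsetSum _ fun c _ => (hF r c).integrable_sq]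
  exact Finset.sum_congr rfl fun r _ =>
    integral_finsetSum _ fun c _ => (hF r c).integrable_sq

lemma integral_frobSq_sub_matExp [IsFiniteMeasure μ] {S : Ω → Matrix (Fin p) (Fin p) ℝ}
    (hS : ∀ r c, MemLp (fun ω => S ω r c) 2 μ) :
    ∫ ω, frobSq (S ω - matExp μ S) ∂μ = ∑ r, ∑ c, Var[fun ω => S ω r c; μ] := by
  rw [integral_frobSq (F := fun ω => S ω - matExp μ S) fun r c =>
    (hS r c).sub (memLp_const (matExp μ S r c))]
  exact Finset.sum_congr rfl fun r _ => Finset.sum_congr rfl fun c _ =>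
    (variance_eq_integral (hS r c).aestronglyMeasurable.aemeasurable).symm

variable [IsProbabilityMeasure μ] {ι : Type*} [Fintype ι]

lemma integral_sq_sum_mul_sub {X : ι → Ω → ℝ} (hX : ∀ i, MemLp (X i) 2 μ)
    (hindep : Pairwise fun i j => IndepFun (X i) (X j) μ) (a : ι → ℝ) (m : ℝ) :
    ∫ ω, (∑ i, a i * X i ω - m) ^ 2 ∂μ
      = ∑ i, a i ^ 2 * Var[X i; μ] + (∑ i, a i * μ[X i] - m) ^ 2 := by
  have hint : ∀ i, Integrable (fun ω => a i * X i ω) μ :=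
    fun i => ((hX i).integrable one_le_two).const_mul _
  have hvar : Var[fun ω => ∑ i, a i * X i ω - m; μ] = ∑ i, a i ^ 2 * Var[X i; μ] := by
    have hsum : (fun ω => ∑ i, a i * X i ω) = ∑ i, a i • X i := by
      ext ω
      simp only [Finset.sum_apply, Pi.smul_apply, smul_eq_mul]
    rw [variance_sub_const (integrable_finsetSum _ fun i _ => hint i).aestronglyMeasurable, hsum,
      IndepFun.variance_sum (fun i _ => (hX i).const_smul _) fun i _ j _ hij =>
        (hindep hij).comp (measurable_const_mul (a i)) (measurable_const_mul (a j))]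
    exact Finset.sum_congr rfl fun i _ => variance_smul _ _ _
  have hmean : μ[fun ω => ∑ i, a i * X i ω - m] = ∑ i, a i * μ[X i] - m := by
    rw [integral_sub (integrable_finsetSum _ fun i _ => hint i) (integrable_const m),
      integral_finsetSum _ fun i _ => hint i]
    simp only [integral_const_mul, integral_const, probReal_univ, one_smul]
  have hsq := variance_eq_sub (X := fun ω => ∑ i, a i * X i ω - m)
    ((memLp_finsetSum Finset.univ fun i _ => (hX i).const_mul (a i)).sub (memLp_const m))
  rw [hvar, hmean] at hsq
  simp only [Pi.pow_apply] at hsq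
  linarith

lemma integral_frobSq_sum_smul_sub {S : ι → Ω → Matrix (Fin p) (Fin p) ℝ}
    (hS : ∀ k r c, MemLp (fun ω => S k ω r c) 2 μ)
    (hindep : Pairwise fun i j => IndepFun (S i) (S j) μ) (a : ι → ℝ)
    (M : Matrix (Fin p) (Fin p) ℝ) :
    ∫ ω, frobSq (∑ i, a i • S i ω - M) ∂μ
      = ∑ i, a i ^ 2 * ∫ ω, frobSq (S i ω - matExp μ (S i)) ∂μ
        + frobSq (∑ i, a i • matExp μ (S i) - M) := by
  have hentry : ∀ (N : ι → Matrix (Fin p) (Fin p) ℝ) r c,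
      (∑ i, a i • N i - M) r c = ∑ i, a i * N i r c - M r c := by
    intro N r c
    simp only [Matrix.sub_apply, Matrix.sum_apply, Matrix.smul_apply, smul_eq_mul]
  have hmemLp : ∀ r c, MemLp (fun ω => (∑ i, a i • S i ω - M) r c) 2 μ := fun r c => by
    simp only [hentry]
    exact (memLp_finsetSum Finset.univ fun i _ => (hS i r c).const_mul (a i)).sub
      (memLp_const (M r c))
  have hvar : ∀ i, ∫ ω, frobSq (S i ω - matExp μ (S i)) ∂μ
      = ∑ r, ∑ c, Var[fun ω => S i ω r c; μ] := fun i => integral_frobSq_sub_matExp (hS i)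
  rw [integral_frobSq (F := fun ω => ∑ i, a i • S i ω - M) hmemLp]
  simp only [hvar]
  simp only [frobSq_eq_sum_sq, hentry]
  have hentrywise : ∀ r c, ∫ ω, (∑ i, a i * S i ω r c - M r c) ^ 2 ∂μ
      = ∑ i, a i ^ 2 * Var[fun ω => S i ω r c; μ]
        + (∑ i, a i * matExp μ (S i) r c - M r c) ^ 2 := fun r c =>
    integral_sq_sum_mul_sub (X := fun i ω => S i ω r c) (fun i => hS i r c)
      (fun i j hij => (hindep hij).comp (measurable_matrix_apply r c) (measurable_matrix_apply r c))
      a (M r c)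
  simp only [hentrywise, Finset.sum_add_distrib, Finset.mul_sum]
  congr 1
  rw [Finset.sum_comm (s := Finset.univ (α := ι))]
  exact Finset.sum_congr rfl fun _ _ => Finset.sum_comm

end RandomMatrix

theorem mse_of_linear_pooling_general
    {Ω : Type*} [MeasurableSpace Ω] (μ : Measure Ω) [IsProbabilityMeasure μ]
    (p K : ℕ) (hp : 0 < p)
    (S : Fin K → Ω → Matrix (Fin p) (Fin p) ℝ)
    (hsymm : ∀ k ω, (S k ω)ᵀ = S k ω)
    (hL2 : ∀ k i j, MemLp (fun ω => S k ω i j) 2 μ)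
    (hindep : iIndepFun S μ)
    (M : Fin K → Matrix (Fin p) (Fin p) ℝ)
    (hM : ∀ k, matExp μ (S k) = M k)
    (δ : Fin K → ℝ)
    (hδ : ∀ k, δ k = (p : ℝ)⁻¹ * ∫ ω, frobSq (S k ω - M k) ∂μ)
    (hδpos : ∀ k, 0 < δ k)
    (C : Matrix (Fin K) (Fin K) ℝ)
    (hC : ∀ i j, C i j = (p : ℝ)⁻¹ * (M i * M j).trace)
    (D : Matrix (Fin K) (Fin K) ℝ) (hD : D = Matrix.diagonal δ) :
    (∀ (a : Fin K → ℝ) (k : Fin K),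
        ∫ ω, frobSq (∑ i, a i • S i ω - M k) ∂μ
          = p * (a ⬝ᵥ ((D + C) *ᵥ a) - 2 * ((fun i => C i k) ⬝ᵥ a) + C k k))
      ∧ (D + C).IsSymm ∧ (D + C).PosDef := by
  have hpne : (p : ℝ) ≠ 0 := Nat.cast_ne_zero.mpr hp.ne'
  have hMsymm : ∀ i, (M i)ᵀ = M i := fun i => hM i ▸ matExp_transpose (hsymm i)
  have hC' : C = (p : ℝ)⁻¹ • frobGram M := by
    ext i j
    simp [frobGram, hC, hMsymm]
  have hgram : frobGram M = (p : ℝ) • C := by rw [hC', smul_inv_smul₀ hpne]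
  have hvar : ∀ i, ∫ ω, frobSq (S i ω - M i) ∂μ = p * δ i := fun i => by
    rw [hδ, mul_inv_cancel_left₀ hpne]
  have hCsymm : C.IsSymm := hC' ▸ (frobGram_isSymm M).smul _
  have hpos : (D + C).PosDef := by
    rw [hD, hC']
    exact (posDef_diagonal_iff.mpr hδpos).add_posSemidef
      ((frobGram_posSemidef M).smul (by positivity))
  refine ⟨fun a k => ?_, isHermitian_iff_isSymm.mp hpos.isHermitian, hpos⟩
  calc ∫ ω, frobSq (∑ i, a i • S i ω - M k) ∂μ
      = ∑ i, a i ^ 2 * (p * δ i) + frobSq (∑ i, a i • M i - M k) := by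
        rw [integral_frobSq_sum_smul_sub hL2 (fun i j hij => hindep.indepFun hij)]
        simp only [hM, hvar]
    _ = p * (a ⬝ᵥ (D *ᵥ a) + (a - Pi.single k 1) ⬝ᵥ (C *ᵥ (a - Pi.single k 1))) := by
        rw [frobSq_sum_smul_sub, hgram, smul_mulVec, dotProduct_smul, smul_eq_mul, mul_add, hD,
          dotProduct_diagonal_mulVec_self, Finset.mul_sum]
        congr 1
        exact Finset.sum_congr rfl fun i _ => by ring
    _ = p * (a ⬝ᵥ ((D + C) *ᵥ a) - 2 * ((fun i => C i k) ⬝ᵥ a) + C k k) := by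
        rw [hCsymm.dotProduct_mulVec_sub_single, add_mulVec, dotProduct_add]
        ring

/-- Theorem 1 of the paper: the MSE of the linearly pooled
estimator is the quadratic `p (aᵀ(D+C)a − 2 cₖᵀa + c_{kk})`, and `D + C` is
symmetric positive definite. -/
theorem mse_of_linear_pooling
    {Ω : Type*} [MeasurableSpace Ω] (μ : Measure Ω) [IsProbabilityMeasure μ]
    (p K : ℕ) (hp : 0 < p)
    (S : Fin K → Ω → Matrix (Fin p) (Fin p) ℝ)
    (hmeas : ∀ k, Measurable (S k))
    (hsymm : ∀ k ω, (S k ω)ᵀ = S k ω)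
    (hL2 : ∀ k i j, MemLp (fun ω => S k ω i j) 2 μ)
    (hindep : iIndepFun S μ)
    (M : Fin K → Matrix (Fin p) (Fin p) ℝ)
    (hM : ∀ k, matExp μ (S k) = M k)
    (δ : Fin K → ℝ)
    (hδ : ∀ k, δ k = (p : ℝ)⁻¹ * ∫ ω, frobSq (S k ω - M k) ∂μ)
    (hδpos : ∀ k, 0 < δ k)
    (C : Matrix (Fin K) (Fin K) ℝ)
    (hC : ∀ i j, C i j = (p : ℝ)⁻¹ * (M i * M j).trace)
    (D : Matrix (Fin K) (Fin K) ℝ) (hD : D = Matrix.diagonal δ) :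
    (∀ (a : Fin K → ℝ) (k : Fin K),
        ∫ ω, frobSq (∑ i, a i • S i ω - M k) ∂μ
          = p * (a ⬝ᵥ ((D + C) *ᵥ a) - 2 * ((fun i => C i k) ⬝ᵥ a) + C k k))
      ∧ (D + C).IsSymm ∧ (D + C).PosDef :=
  mse_of_linear_pooling_general μ p K hp S hsymm hL2 hindep M hM δ hδ hδpos C hC D hD
end
end

section
/- Under the equal-covariance setting ($E[S_k]=M\neq 0$ for all $k$), if additionally all scaled mean squared errors are equal, $\delta_1=\cdots=\delta_K\equiv\delta>0$, then every entry of the unconstrained optimal coefficient matrix equals $a^\star = 1/(\mathrm{NMSE}+K)$, where $\mathrm{NMSE}=E[\|S_j-M\|_F^2]/\|M\|_F^2$ (the same for all $j$), and consequently $a^\star < 1/K$. -/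
open MeasureTheory Matrix ProbabilityTheory Filter Asymptotics

noncomputable section

/-! With equal MSEs, `D + C = δ • 1 + c • J` with `J` the all-ones matrix and
`c = tr(M²)/p = ‖M‖_F²/p > 0`. A kernel vector of `δ • 1 + c • J` has zero sum (add up its rows),
hence vanishes, so the matrix is invertible; it maps the constant vector `c/(δ + K c)` to the
constant vector `c`, so this is every optimal coefficient. Since `NMSE = p δ/‖M‖_F² = δ/c`, that
value is `1/(NMSE + K)`, which is below `1/K` because `NMSE > 0`. -/

section ConstantPlusDiagonal

variable {n 𝕜 : Type*} [Fintype n] [DecidableEq n] [Field 𝕜]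

theorem diagonal_const_add_of_const_mulVec (δ c : 𝕜) (x : n → 𝕜) :
    (diagonal (fun _ => δ) + of fun _ _ => c) *ᵥ x = fun i => δ * x i + c * ∑ j, x j := by
  ext i
  rw [add_mulVec, Pi.add_apply, mulVec_diagonal]
  simp [mulVec, dotProduct, Finset.mul_sum]

theorem det_diagonal_const_add_of_const_ne_zero {δ c : 𝕜} (hδ : δ ≠ 0)
    (hδc : δ + Fintype.card n * c ≠ 0) :
    (diagonal (fun _ : n => δ) + of fun _ _ => c).det ≠ 0 := by
  intro hdet
  obtain ⟨x, hx0, hx⟩ := exists_mulVec_eq_zero_iff.mpr hdet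
  rw [diagonal_const_add_of_const_mulVec] at hx
  have hrow : ∀ i, δ * x i + c * ∑ j, x j = 0 := fun i => congrFun hx i
  have hsum : ∑ j, x j = 0 := by
    have htotal : (δ + Fintype.card n * c) * ∑ j, x j = 0 := by
      have := Finset.sum_eq_zero (s := Finset.univ) fun i _ => hrow i
      rw [Finset.sum_add_distrib, ← Finset.mul_sum, Finset.sum_const, Finset.card_univ,
        nsmul_eq_mul] at this
      linear_combination this
    exact (mul_eq_zero.mp htotal).resolve_left hδc
  refine hx0 (funext fun i => ?_)
  simpa [hsum, hδ] using hrow i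

theorem inv_diagonal_const_add_of_const_mulVec_const {δ c : 𝕜} (hδ : δ ≠ 0)
    (hδc : δ + Fintype.card n * c ≠ 0) (b : 𝕜) :
    (diagonal (fun _ : n => δ) + of fun _ _ => c)⁻¹ *ᵥ (fun _ => b) =
      fun _ => b / (δ + Fintype.card n * c) := by
  have hsolve : (diagonal (fun _ : n => δ) + of fun _ _ => c) *ᵥ
      (fun _ => b / (δ + Fintype.card n * c)) = fun _ => b := by
    rw [diagonal_const_add_of_const_mulVec]
    ext
    simp only [Finset.sum_const, Finset.card_univ, nsmul_eq_mul]
    field_simp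
  nth_rw 1 [← hsolve]
  rw [mulVec_mulVec,
    nonsing_inv_mul _ (isUnit_iff_ne_zero.mpr (det_diagonal_const_add_of_const_ne_zero hδ hδc)),
    one_mulVec]

end ConstantPlusDiagonal

theorem frobSq_pos {p : ℕ} {A : Matrix (Fin p) (Fin p) ℝ} (hA : A ≠ 0) : 0 < frobSq A := by
  rw [frobSq, ← conjTranspose_eq_transpose_of_trivial]
  exact (posSemidef_conjTranspose_mul_self A).trace_nonneg.lt_of_ne'
    (trace_conjTranspose_mul_self_eq_zero_iff.not.mpr hA)

theorem equal_covariance_equal_delta_coefficients_general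
    {Ω : Type*} [MeasurableSpace Ω] (μ : Measure Ω)
    (p K : ℕ) (hp : 0 < p) (hK : 0 < K)
    (S : Fin K → Ω → Matrix (Fin p) (Fin p) ℝ)
    (M : Matrix (Fin p) (Fin p) ℝ) (hMsymm : Mᵀ = M) (hM0 : M ≠ 0)
    (δ : ℝ) (hδ : ∀ k : Fin K, (p : ℝ)⁻¹ * ∫ ω, frobSq (S k ω - M) ∂μ = δ)
    (hδpos : 0 < δ)
    (C : Matrix (Fin K) (Fin K) ℝ)
    (hC : ∀ i j, C i j = (p : ℝ)⁻¹ * (M * M).trace)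
    (D : Matrix (Fin K) (Fin K) ℝ) (hD : D = Matrix.diagonal (fun _ : Fin K => δ))
    (nmse : ℝ)
    (hnmse : ∀ j : Fin K, nmse = (∫ ω, frobSq (S j ω - M) ∂μ) / frobSq M)
    (astar : Fin K → Fin K → ℝ)
    (hastar : ∀ k, astar k = (D + C)⁻¹ *ᵥ (fun i => C i k)) :
    ∀ (k j : Fin K),
      astar k j = 1 / (nmse + K) ∧ astar k j < 1 / K := by
  intro k j
  set c := (p : ℝ)⁻¹ * frobSq M
  have hpR : (0 : ℝ) < p := Nat.cast_pos.mpr hp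
  have hKR : (0 : ℝ) < K := Nat.cast_pos.mpr hK
  have hM : 0 < frobSq M := frobSq_pos hM0
  have hc : 0 < c := by positivity
  have hCconst : C = of fun _ _ => c := by
    ext i l
    simp only [hC, of_apply, c, frobSq, hMsymm]
  have hnmse_eq : nmse = δ / c := by
    rw [hnmse j, ← hδ j, mul_div_mul_left _ _ (inv_ne_zero hpR.ne')]
  have hastar_eq : astar k j = c / (δ + K * c) := by
    have hδc : δ + Fintype.card (Fin K) * c ≠ 0 := by simp only [Fintype.card_fin]; positivity
    rw [hastar, hD, hCconst]
    simp only [of_apply]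
    rw [inv_diagonal_const_add_of_const_mulVec_const hδpos.ne' hδc, Fintype.card_fin]
  rw [hastar_eq, hnmse_eq]
  constructor
  · field_simp
  · rw [div_lt_div_iff₀ (by positivity) hKR]
    linarith

/-- equal-covariance, equal-MSE case. If `E[S_k] = M ≠ 0` for
all `k` and the scaled MSEs are all equal to `δ > 0`, then every entry of the
unconstrained optimal coefficient matrix equals `a⋆ = 1/(NMSE + K) < 1/K`. -/
theorem equal_covariance_equal_delta_coefficients
    {Ω : Type*} [MeasurableSpace Ω] (μ : Measure Ω) [IsProbabilityMeasure μ]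
    (p K : ℕ) (hp : 0 < p) (hK : 0 < K)
    (S : Fin K → Ω → Matrix (Fin p) (Fin p) ℝ)
    (hmeas : ∀ k, Measurable (S k))
    (hsymm : ∀ k ω, (S k ω)ᵀ = S k ω)
    (hL2 : ∀ k i j, MemLp (fun ω => S k ω i j) 2 μ)
    (hindep : iIndepFun S μ)
    (M : Matrix (Fin p) (Fin p) ℝ) (hMsymm : Mᵀ = M) (hM0 : M ≠ 0)
    (hM : ∀ k, matExp μ (S k) = M)
    (δ : ℝ) (hδ : ∀ k : Fin K, (p : ℝ)⁻¹ * ∫ ω, frobSq (S k ω - M) ∂μ = δ)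
    (hδpos : 0 < δ)
    (C : Matrix (Fin K) (Fin K) ℝ)
    (hC : ∀ i j, C i j = (p : ℝ)⁻¹ * (M * M).trace)
    (D : Matrix (Fin K) (Fin K) ℝ) (hD : D = Matrix.diagonal (fun _ : Fin K => δ))
    (nmse : ℝ)
    (hnmse : ∀ j : Fin K, nmse = (∫ ω, frobSq (S j ω - M) ∂μ) / frobSq M)
    (astar : Fin K → Fin K → ℝ)
    (hastar : ∀ k, astar k = (D + C)⁻¹ *ᵥ (fun i => C i k)) :
    ∀ (k j : Fin K),
      astar k j = 1 / (nmse + K) ∧ astar k j < 1 / K :=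
  equal_covariance_equal_delta_coefficients_general μ p K hp hK S M hMsymm hM0 δ hδ hδpos C hC D hD
    nmse hnmse astar hastar
end
end
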